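/- arXiv:1111.6663 — 3 statements merged into one kernel-verified Lean document; each statement's English description precedes it below -/
import Mathlib

section
/- For every integer d ≥ 2 and every α ∈ (0, π/2], the Chen–Wang bound improves the Bérard–Besson–Gallot bound: (4 d α²)/( (2α)² (1 − cos^d α) ) ≥ d·(∫₀^{π/2} cos^{d-1} t dt / ∫₀^{α} cos^{d-1} t dt)^{2/d}, i.e. d/(1 − cos^d α) ≥ d·(∫₀^{π/2} cos^{d-1} t dt / ∫₀^{α} cos^{d-1} t dt)^{2/d}. -/
open Real Set intervalIntegral

/-! With `I α = ∫₀^α cos^(d-1)` and `S α = 1 - cos^d α`, one has `dI/dS = 1 / (d sin α)`, which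
decreases on `(0, π/2)`. So `I` is a concave function of `S ∈ [0, 1]`, vanishing at `S = 0` and
equal to `I (π/2)` at `S = 1`, whence `I (π/2) · S ≤ I`. Thus `I (π/2) / I α ≤ 1 / S`, and raising
to the power `2/d ≤ 1` keeps this bound because `1 / S ≥ 1`; the left-hand side is `d / S`. -/

theorem min_le_of_hasDerivAt_sign_change {f f' : ℝ → ℝ} {a b x : ℝ}
    (hf : ContinuousOn f (Icc a b)) (hderiv : ∀ y ∈ Ioo a b, HasDerivAt f (f' y) y)
    (hsign : ∀ y ∈ Ioo a b, ∀ z ∈ Ioo a b, y ≤ z → 0 < f' z → 0 ≤ f' y)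
    (hx : x ∈ Icc a b) : min (f a) (f b) ≤ f x := by
  by_cases hleft : ∀ y ∈ Ioo a x, 0 ≤ f' y
  · have hmono : MonotoneOn f (Icc a x) :=
      monotoneOn_of_hasDerivWithinAt_nonneg (convex_Icc a x) (hf.mono (Icc_subset_Icc_right hx.2))
        (fun y hy ↦ by
          rw [interior_Icc] at hy ⊢
          exact (hderiv y ⟨hy.1, hy.2.trans_le hx.2⟩).hasDerivWithinAt)
        (fun y hy ↦ hleft y (by rwa [interior_Icc] at hy))
    exact min_le_left _ _ |>.trans (hmono (left_mem_Icc.2 hx.1) (right_mem_Icc.2 hx.1) hx.1)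
  · push Not at hleft
    obtain ⟨y, hy, hy'⟩ := hleft
    have hright : ∀ z ∈ Ioo x b, f' z ≤ 0 := fun z hz ↦ not_lt.1 fun hz' ↦
      hy'.not_ge (hsign y ⟨hy.1, hy.2.trans_le hx.2⟩ z ⟨hx.1.trans_lt hz.1, hz.2⟩
        (hy.2.trans hz.1).le hz')
    have hanti : AntitoneOn f (Icc x b) :=
      antitoneOn_of_hasDerivWithinAt_nonpos (convex_Icc x b) (hf.mono (Icc_subset_Icc_left hx.1))
        (fun z hz ↦ by
          rw [interior_Icc] at hz ⊢
          exact (hderiv z ⟨hx.1.trans_lt hz.1, hz.2⟩).hasDerivWithinAt)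
        (fun z hz ↦ hright z (by rwa [interior_Icc] at hz))
    exact min_le_right _ _ |>.trans (hanti (left_mem_Icc.2 hx.2) (right_mem_Icc.2 hx.2) hx.2)

theorem hasDerivAt_one_sub_cos_pow (n : ℕ) (x : ℝ) :
    HasDerivAt (fun t ↦ 1 - cos t ^ (n + 1)) ((n + 1) * cos x ^ n * sin x) x :=
  (((hasDerivAt_cos x).pow (n + 1)).const_sub 1).congr_deriv (by push_cast; ring)

theorem integral_cos_pow_mul_one_sub_cos_pow_le (n : ℕ) {α : ℝ} (hα : α ∈ Icc 0 (π / 2)) :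
    (∫ t in (0 : ℝ)..π / 2, cos t ^ n) * (1 - cos α ^ (n + 1)) ≤
      ∫ t in (0 : ℝ)..α, cos t ^ n := by
  set K := ∫ t in (0 : ℝ)..π / 2, cos t ^ n
  have hK : 0 ≤ K := (EulerSine.integral_cos_pow_pos n).le
  have hcont : Continuous fun t : ℝ ↦ cos t ^ n := by fun_prop
  set f : ℝ → ℝ := fun x ↦ (∫ t in (0 : ℝ)..x, cos t ^ n) - K * (1 - cos x ^ (n + 1))
  have hderiv : ∀ x, HasDerivAt f (cos x ^ n * (1 - K * (n + 1) * sin x)) x := fun x ↦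
    ((hcont.integral_hasStrictDerivAt 0 x).hasDerivAt.sub
      ((hasDerivAt_one_sub_cos_pow n x).const_mul K)).congr_deriv (by ring)
  have hsign : ∀ y ∈ Ioo 0 (π / 2), ∀ z ∈ Ioo 0 (π / 2), y ≤ z →
      0 < cos z ^ n * (1 - K * (n + 1) * sin z) → 0 ≤ cos y ^ n * (1 - K * (n + 1) * sin y) := by
    intro y hy z hz hyz hpos
    have hcos : ∀ t ∈ Ioo 0 (π / 2), 0 < cos t ^ n := fun t ht ↦
      pow_pos (cos_pos_of_mem_Ioo ⟨by linarith [ht.1, pi_pos], ht.2⟩) n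
    have hz' : 0 < 1 - K * (n + 1) * sin z := pos_of_mul_pos_right hpos (hcos z hz).le
    have hsin : sin y ≤ sin z :=
      sin_le_sin_of_le_of_le_pi_div_two (by linarith [hy.1, pi_pos]) hz.2.le hyz
    have hKsin : K * (n + 1) * sin y ≤ K * (n + 1) * sin z := by gcongr
    exact mul_nonneg (hcos y hy).le (by linarith)
  have hf0 : f 0 = 0 := by simp [f]
  have hfπ : f (π / 2) = 0 := by simp [f, K]
  have hmin := min_le_of_hasDerivAt_sign_change
    (fun x _ ↦ (hderiv x).continuousAt.continuousWithinAt) (fun y _ ↦ hderiv y) hsign hα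
  rw [hf0, hfπ, min_self] at hmin
  simpa [f, sub_nonneg] using hmin

theorem rpow_le_inv_of_mul_le_one {x s q : ℝ} (hx : 0 ≤ x) (hs : 0 < s) (hs1 : s ≤ 1)
    (hxs : x * s ≤ 1) (hq : 0 ≤ q) (hq1 : q ≤ 1) : x ^ q ≤ s⁻¹ :=
  calc x ^ q ≤ s⁻¹ ^ q := rpow_le_rpow hx (by rwa [← one_div, le_div_iff₀ hs]) hq
    _ ≤ s⁻¹ ^ (1 : ℝ) := rpow_le_rpow_of_exponent_le (one_le_inv₀ hs |>.2 hs1) hq1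
    _ = s⁻¹ := rpow_one _

theorem stmt1 (d : ℕ) (hd : 2 ≤ d) (α : ℝ) (hα : α ∈ Set.Ioc 0 (π / 2)) :
    4 * d * α ^ 2 / ((2 * α) ^ 2 * (1 - Real.cos α ^ d)) ≥
      (d : ℝ) * ((∫ t in (0:ℝ)..(π / 2), Real.cos t ^ (d - 1)) /
        (∫ t in (0:ℝ)..α, Real.cos t ^ (d - 1))) ^ ((2 : ℝ) / d) := by
  obtain ⟨hα0, hαπ⟩ := hα
  obtain ⟨n, rfl⟩ : ∃ n, d = n + 1 := ⟨d - 1, by omega⟩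
  rw [Nat.add_sub_cancel]
  have hcos : 0 ≤ cos α := cos_nonneg_of_mem_Icc ⟨by linarith [pi_pos], hαπ⟩
  have hcos1 : cos α < 1 := by
    simpa using strictAntiOn_cos ⟨le_rfl, pi_pos.le⟩ ⟨hα0.le, by linarith [pi_pos]⟩ hα0
  have hS : 0 < 1 - cos α ^ (n + 1) := sub_pos.2 (pow_lt_one₀ hcos hcos1 n.succ_ne_zero)
  have hS1 : 1 - cos α ^ (n + 1) ≤ 1 := sub_le_self _ (pow_nonneg hcos _)
  have hI : 0 < ∫ t in (0 : ℝ)..α, cos t ^ n :=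
    intervalIntegral_pos_of_pos_on ((continuous_cos.pow n).intervalIntegrable _ _) (fun t ht ↦
      pow_pos (cos_pos_of_mem_Ioo ⟨by linarith [ht.1, pi_pos], by linarith [ht.2]⟩) n) hα0
  have hkey := integral_cos_pow_mul_one_sub_cos_pow_le n ⟨hα0.le, hαπ⟩
  have hlhs : 4 * ((n + 1 : ℕ) : ℝ) * α ^ 2 / ((2 * α) ^ 2 * (1 - cos α ^ (n + 1))) =
      (n + 1 : ℕ) * (1 - cos α ^ (n + 1))⁻¹ := by
    field_simp
    norm_num
  rw [ge_iff_le, hlhs]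
  gcongr
  refine rpow_le_inv_of_mul_le_one (div_nonneg (EulerSine.integral_cos_pow_pos n).le hI.le)
    hS hS1 ?_ (by positivity) ?_
  · rwa [div_mul_eq_mul_div, div_le_one hI]
  · rw [div_le_one (by positivity)]
    exact_mod_cast hd
end

section
/- On the region |K|D² ≤ 4, the refined Chen–Scacciatelli–Yao bound improves the Shi–Zhang bound: π²/D² + K/2 + (10 − π²)·K²D²/16 ≥ (π/D + KD/(4π))² whenever |K| D² ≤ 4. -/
/-! Expanding the square, the Shi–Zhang bound is `π²/D² + K/2 + K²D²/(16π²)`, so the claim reduces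
to `1/π² ≤ 10 - π²`, i.e. `(π² - 5)² ≤ 24`, which holds since `π² < 9.87`. -/

open Real

lemma add_div_sq_expand (a D K : ℝ) (ha : a ≠ 0) (hD : D ≠ 0) :
    (a / D + K * D / (4 * a)) ^ 2 = a ^ 2 / D ^ 2 + K / 2 + K ^ 2 * D ^ 2 / (16 * a ^ 2) := by
  field_simp
  ring

lemma inv_pi_sq_le_ten_sub_pi_sq : 1 / π ^ 2 ≤ 10 - π ^ 2 := by
  rw [div_le_iff₀ (by positivity)]
  have hlo : 3 < π := pi_gt_three
  have hhi : π < 3.1416 := pi_lt_d4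
  have hsq : π ^ 2 < 9.87 := by nlinarith
  nlinarith

theorem stmt5_general (K D : ℝ) (hD : 0 < D) :
    π ^ 2 / D ^ 2 + K / 2 + (10 - π ^ 2) * K ^ 2 * D ^ 2 / 16 ≥
      (π / D + K * D / (4 * π)) ^ 2 := by
  rw [add_div_sq_expand π D K pi_ne_zero hD.ne', ge_iff_le]
  have key : K ^ 2 * D ^ 2 / (16 * π ^ 2) ≤ (10 - π ^ 2) * K ^ 2 * D ^ 2 / 16 := by
    calc K ^ 2 * D ^ 2 / (16 * π ^ 2) = 1 / π ^ 2 * (K ^ 2 * D ^ 2) / 16 := by ring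
      _ ≤ (10 - π ^ 2) * (K ^ 2 * D ^ 2) / 16 := by
        gcongr
        exact inv_pi_sq_le_ten_sub_pi_sq
      _ = (10 - π ^ 2) * K ^ 2 * D ^ 2 / 16 := by ring
  linarith

theorem stmt5 (K D : ℝ) (hD : 0 < D) (h : |K| * D ^ 2 ≤ 4) :
    π ^ 2 / D ^ 2 + K / 2 + (10 - π ^ 2) * K ^ 2 * D ^ 2 / 16 ≥
      (π / D + K * D / (4 * π)) ^ 2 :=
  stmt5_general K D hD
end

section
/- (Shi–Zhang identity, Lemma 2.1) Let ℓ > 0, F ∈ C[0,ℓ] ∩ C¹(0,ℓ) with F(0) = 0, and let f be a C³ solution of f'' + F f' = −λ f on [0,ℓ] with f(0) = 0 and f'(ℓ) = 0, with f' > 0 on [0,ℓ). Then for each s ∈ (0,1), the function g := (f')^{1/(2(1−s))} satisfies 4 s (1 − s) ∫₀^ℓ (g')² dr = ∫₀^ℓ (λ + s F') g² dr, and g'(0) = 0, g(ℓ) = 0. -/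
/-!
Write `u = f'`, `v = f''`, `w = f'''` and `t = 1/(2(1-s))`, so that `g = u^t`, `2ts = 2t - 1` and
`4s(1-s)t² = 2t - 1`. Eliminating `λf` with the equation, the flux
`Φ = -λ f u^(2t-1) - s F u^(2t)` has derivative `(2t-1) v² u^(2t-2) - (λ + sF') u^(2t)`, which is
`4s(1-s) (g')² - (λ + sF') g²`; it vanishes at `0` because `f(0) = F(0) = 0` and at `ℓ` because
`u(ℓ) = 0`, so the identity is the fundamental theorem of calculus for `Φ`.

The analytic point is integrability near `ℓ`, where `u^(2t-2)` may blow up: `v² u^(2t-2)` is, up to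
the factor `2t - 1`, the nonnegative part of the derivative of `v u^(2t-1)`, whose other part
`w u^(2t-1)` is continuous; and `F' u^(2t) = -(λu + w + Fv) u^(2t-1)` by the differentiated equation.
-/

open Real Set MeasureTheory intervalIntegral Filter Topology

lemma intervalIntegrable_sq_mul_rpow_sub_one {u v w : ℝ → ℝ} {a b p : ℝ} (hab : a ≤ b)
    (hp : 0 < p) (hu : ∀ x, HasDerivAt u (v x) x) (hv : ∀ x, HasDerivAt v (w x) x)
    (hw : Continuous w) (hpos : ∀ x ∈ Ioo a b, 0 < u x) :
    IntervalIntegrable (fun x => v x ^ 2 * u x ^ (p - 1)) volume a b := by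
  have hup : Continuous fun x => u x ^ p := (continuous_rpow_const hp.le).comp
    (continuous_iff_continuousAt.2 fun x => (hu x).continuousAt)
  have hwu : Continuous fun x => w x * u x ^ p := hw.mul hup
  have hprim (x : ℝ) := (hwu.integral_hasStrictDerivAt a x).hasDerivAt
  let G x := (v x * u x ^ p - ∫ y in a..x, w y * u y ^ p) / p
  have hG : Continuous G :=
    (((continuous_iff_continuousAt.2 fun x => (hv x).continuousAt).mul hup).sub
      (continuous_iff_continuousAt.2 fun x => (hprim x).continuousAt)).div_const p
  have hG' (x : ℝ) (hx : x ∈ Ioo a b) : HasDerivAt G (v x ^ 2 * u x ^ (p - 1)) x := by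
    refine (((hv x).mul ((hu x).rpow_const (Or.inl (hpos x hx).ne'))).sub (hprim x)).div_const p
      |>.congr_deriv ?_
    field_simp
    ring
  exact (intervalIntegrable_iff_integrableOn_Ioc_of_le hab).2 <|
    integrableOn_deriv_of_nonneg hG.continuousOn hG' fun x hx => by
      have := hpos x hx
      positivity

lemma ode_hasDerivAt_eq {lam r F' : ℝ} {F f u v w : ℝ → ℝ} (hf : HasDerivAt f (u r) r)
    (hu : HasDerivAt u (v r) r) (hv : HasDerivAt v (w r) r) (hF : HasDerivAt F F' r)
    (hode : ∀ᶠ x in 𝓝 r, v x + F x * u x = -lam * f x) :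
    w r + (F' * u r + F r * v r) = -lam * u r :=
  (hv.add (hF.mul hu)).unique ((hf.const_mul (-lam)).congr_of_eventuallyEq hode)

lemma intervalIntegrable_deriv_mul_rpow {lam a b q : ℝ} {F f u v w : ℝ → ℝ} (hab : a ≤ b)
    (hq : 1 ≤ q) (hFc : ContinuousOn F (Icc a b)) (hFd : DifferentiableOn ℝ F (Ioo a b))
    (hf : ∀ x, HasDerivAt f (u x) x) (hu : ∀ x, HasDerivAt u (v x) x)
    (hv : ∀ x, HasDerivAt v (w x) x) (hw : Continuous w)
    (hode : ∀ x ∈ Ioo a b, v x + F x * u x = -lam * f x) (hpos : ∀ x ∈ Ioo a b, 0 < u x) :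
    IntervalIntegrable (fun x => deriv F x * u x ^ q) volume a b := by
  have huc : Continuous u := continuous_iff_continuousAt.2 fun x => (hu x).continuousAt
  have hvc : Continuous v := continuous_iff_continuousAt.2 fun x => (hv x).continuousAt
  have hcont : ContinuousOn (fun x => -(lam * u x + w x + F x * v x) * u x ^ (q - 1)) (Icc a b) :=
    ((((continuous_const.mul huc).add hw).continuousOn.add (hFc.mul hvc.continuousOn)).neg).mul
      ((continuous_rpow_const (by linarith)).comp huc).continuousOn
  refine (hcont.intervalIntegrable_of_Icc hab).congr_uIoo ?_
  rw [uIoo_of_le hab]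
  intro x hx
  have hF := (hFd.differentiableAt (isOpen_Ioo.mem_nhds hx)).hasDerivAt
  have hderiv := ode_hasDerivAt_eq (hf x) (hu x) (hv x) hF
    (eventually_of_mem (isOpen_Ioo.mem_nhds hx) hode)
  have hsplit : u x ^ q = u x ^ (q - 1) * u x := by
    rw [← rpow_add_one (hpos x hx).ne', sub_add_cancel]
  simp only [hsplit]
  linear_combination -(u x ^ (q - 1)) * hderiv

lemma hasDerivAt_flux {lam s t r F' : ℝ} {F f u v : ℝ → ℝ} (hst : 2 * t * (1 - s) = 1)
    (hf : HasDerivAt f (u r) r) (hu : HasDerivAt u (v r) r) (hF : HasDerivAt F F' r)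
    (hur : 0 < u r) (hode : v r + F r * u r = -lam * f r) :
    HasDerivAt (fun x => -lam * f x * u x ^ (2 * t - 1) - s * F x * u x ^ (2 * t))
      ((2 * t - 1) * (v r ^ 2 * u r ^ (2 * t - 2)) - (lam + s * F') * u r ^ (2 * t)) r := by
  refine ((hf.const_mul (-lam)).mul (hu.rpow_const (p := 2 * t - 1) (Or.inl hur.ne'))).sub
    ((hF.const_mul s).mul (hu.rpow_const (p := 2 * t) (Or.inl hur.ne'))) |>.congr_deriv ?_
  have e1 : u r ^ (2 * t - 1) = u r ^ (2 * t - 2) * u r := by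
    rw [← rpow_add_one hur.ne']; ring_nf
  have e2 : u r ^ (2 * t) = u r ^ (2 * t - 2) * u r * u r := by
    rw [← rpow_add_one hur.ne', ← rpow_add_one hur.ne']; ring_nf
  rw [show 2 * t - 1 - 1 = 2 * t - 2 by ring, e1, e2]
  linear_combination -(2 * t - 1) * v r * u r ^ (2 * t - 2) * hode
    + F r * v r * u r * u r ^ (2 * t - 2) * hst

lemma deriv_rpow_sq {u v : ℝ → ℝ} {t r : ℝ} (hu : HasDerivAt u (v r) r) (hur : 0 < u r) :
    deriv (fun x => u x ^ t) r ^ 2 = t ^ 2 * (v r ^ 2 * u r ^ (2 * t - 2)) := by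
  rw [(hu.rpow_const (Or.inl hur.ne')).deriv, show 2 * t - 2 = (t - 1) + (t - 1) by ring,
    rpow_add hur]
  ring

theorem integral_sq_deriv_rpow_eq {ℓ lam s t : ℝ} {F f u v w g : ℝ → ℝ} (hl : 0 ≤ ℓ)
    (hs : s ∈ Ioo (0:ℝ) 1) (hst : 2 * t * (1 - s) = 1)
    (hFc : ContinuousOn F (Icc 0 ℓ)) (hFd : DifferentiableOn ℝ F (Ioo 0 ℓ)) (hF0 : F 0 = 0)
    (hf : ∀ x, HasDerivAt f (u x) x) (hu : ∀ x, HasDerivAt u (v x) x)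
    (hv : ∀ x, HasDerivAt v (w x) x) (hw : Continuous w)
    (hode : ∀ r ∈ Icc 0 ℓ, v r + F r * u r = -lam * f r) (hf0 : f 0 = 0) (hul : u ℓ = 0)
    (hpos : ∀ r ∈ Ioo 0 ℓ, 0 < u r) (hg : ∀ x, g x = u x ^ t) :
    4 * s * (1 - s) * ∫ r in 0..ℓ, deriv g r ^ 2
      = ∫ r in 0..ℓ, (lam + s * deriv F r) * g r ^ 2 := by
  obtain ⟨hs0, hs1⟩ := hs
  have ht : 0 < 2 * t - 1 := by nlinarith
  have hode' (r : ℝ) (hr : r ∈ Ioo 0 ℓ) := hode r (Ioo_subset_Icc_self hr)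
  have hfc : Continuous f := continuous_iff_continuousAt.2 fun x => (hf x).continuousAt
  have huc : Continuous u := continuous_iff_continuousAt.2 fun x => (hu x).continuousAt
  have hg_sq (r : ℝ) (hr : r ∈ Ioo 0 ℓ) : g r ^ 2 = u r ^ (2 * t) := by
    rw [hg, ← rpow_two, ← rpow_mul (hpos r hr).le, mul_comm]
  have hderiv_sq (r : ℝ) (hr : r ∈ Ioo 0 ℓ) :
      4 * s * (1 - s) * deriv g r ^ 2 = (2 * t - 1) * (v r ^ 2 * u r ^ (2 * t - 2)) := by
    rw [show g = fun x => u x ^ t from funext hg, deriv_rpow_sq (hu r) (hpos r hr)]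
    linear_combination (2 * t * s - 1) * (v r ^ 2 * u r ^ (2 * t - 2)) * hst
  have hA : IntervalIntegrable (fun r => 4 * s * (1 - s) * deriv g r ^ 2) volume 0 ℓ := by
    have h := intervalIntegrable_sq_mul_rpow_sub_one hl ht hu hv hw hpos
    rw [show 2 * t - 1 - 1 = 2 * t - 2 by ring] at h
    refine (h.const_mul (2 * t - 1)).congr_uIoo ?_
    rw [uIoo_of_le hl]
    exact fun r hr => (hderiv_sq r hr).symm
  have hB : IntervalIntegrable (fun r => (lam + s * deriv F r) * g r ^ 2) volume 0 ℓ := by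
    refine ((((continuous_rpow_const (q := 2 * t) (by linarith)).comp huc).const_mul lam
      |>.intervalIntegrable 0 ℓ).add
      ((intervalIntegrable_deriv_mul_rpow hl (q := 2 * t) (by linarith) hFc hFd hf hu hv hw hode'
        hpos).const_mul s)).congr_uIoo ?_
    rw [uIoo_of_le hl]
    intro r hr
    simp only [Function.comp_apply, hg_sq r hr]
    ring
  let Φ x := -lam * f x * u x ^ (2 * t - 1) - s * F x * u x ^ (2 * t)
  have hΦc : ContinuousOn Φ (Icc 0 ℓ) :=
    ((continuous_const.mul hfc).mul ((continuous_rpow_const ht.le).comp huc)).continuousOn.sub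
      ((continuousOn_const.mul hFc).mul ((continuous_rpow_const (by linarith)).comp huc).continuousOn)
  have hΦ' (r : ℝ) (hr : r ∈ Ioo 0 ℓ) :
      HasDerivAt Φ (4 * s * (1 - s) * deriv g r ^ 2 - (lam + s * deriv F r) * g r ^ 2) r := by
    rw [hderiv_sq r hr, hg_sq r hr]
    exact hasDerivAt_flux hst (hf r) (hu r)
      (hFd.differentiableAt (isOpen_Ioo.mem_nhds hr)).hasDerivAt (hpos r hr) (hode' r hr)
  have hFTC := integral_eq_sub_of_hasDerivAt_of_le hl hΦc hΦ' (hA.sub hB)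
  rw [integral_sub hA hB, intervalIntegral.integral_const_mul] at hFTC
  have hΦ0 : Φ 0 = 0 := by simp [Φ, hf0, hF0]
  have hΦℓ : Φ ℓ = 0 := by simp [Φ, hul, zero_rpow ht.ne', zero_rpow (by linarith : 2 * t ≠ 0)]
  linarith

theorem stmt11 (ℓ lam : ℝ) (hl : 0 < ℓ) (F f : ℝ → ℝ)
    (hFc : ContinuousOn F (Set.Icc 0 ℓ)) (hF1 : ContDiffOn ℝ 1 F (Set.Ioo 0 ℓ))
    (hF0 : F 0 = 0)
    (hf : ContDiff ℝ 3 f)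
    (hode : ∀ r ∈ Set.Icc (0:ℝ) ℓ, deriv (deriv f) r + F r * deriv f r = -lam * f r)
    (hf0 : f 0 = 0) (hfl : deriv f ℓ = 0)
    (hf' : ∀ r ∈ Set.Ico (0:ℝ) ℓ, 0 < deriv f r)
    (s : ℝ) (hs : s ∈ Set.Ioo (0:ℝ) 1)
    (g : ℝ → ℝ) (hg : ∀ r, g r = deriv f r ^ (1 / (2 * (1 - s)))) :
    4 * s * (1 - s) * (∫ r in (0:ℝ)..ℓ, (deriv g r) ^ 2)
        = (∫ r in (0:ℝ)..ℓ, (lam + s * deriv F r) * (g r) ^ 2) ∧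
      deriv g 0 = 0 ∧ g ℓ = 0 := by
  have hs1 : 1 - s ≠ 0 := (sub_pos.2 hs.2).ne'
  obtain ⟨hd0, -, hc1⟩ := (contDiff_succ_iff_deriv (n := 2)).1 hf
  obtain ⟨hd1, -, hc2⟩ := (contDiff_succ_iff_deriv (n := 1)).1 hc1
  obtain ⟨hd2, -, hc3⟩ := (contDiff_succ_iff_deriv (n := 0)).1 hc2
  have hv0 : deriv (deriv f) 0 = 0 := by simpa [hF0, hf0] using hode 0 ⟨le_rfl, hl.le⟩
  refine ⟨integral_sq_deriv_rpow_eq hl.le hs (by field_simp) hFc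
    (hF1.differentiableOn one_ne_zero) hF0 (fun x => (hd0 x).hasDerivAt)
    (fun x => (hd1 x).hasDerivAt) (fun x => (hd2 x).hasDerivAt) (contDiff_zero.1 hc3) hode hf0 hfl
    (fun r hr => hf' r (Ioo_subset_Ico_self hr)) hg, ?_, ?_⟩
  · rw [show g = fun x => deriv f x ^ (1 / (2 * (1 - s))) from funext hg,
      ((hd1 0).hasDerivAt.rpow_const (Or.inl (hf' 0 ⟨le_rfl, hl⟩).ne')).deriv, hv0, zero_mul,
      zero_mul]
  · rw [hg, hfl, zero_rpow (by simpa using hs1)]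
end
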